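/- Let G be a finite group with elements g₁, g₂ conjugate in G, both of order n, and let v ∈ G^d be a tuple whose entries generate G. Then the tuples v·(g₁,…,g₁) and v·(g₂,…,g₂) (each appending n copies) are braid equivalent under the Hurwitz action. -/

import Mathlib

/-- An elementary Hurwitz move on tuples of elements of `G`:
`(…, a, b, …) ↦ (…, b, b⁻¹ a b, …)`. -/
def HurwitzMove {G : Type*} [Group G] (v w : List G) : Prop :=
  ∃ (x y : List G) (a b : G), v = x ++ a :: b :: y ∧ w = x ++ b :: (b⁻¹ * a * b) :: y

/-- Braid equivalence: same orbit under the Hurwitz action of the braid group. -/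
def BraidEquiv {G : Type*} [Group G] (v w : List G) : Prop :=
  Relation.EqvGen HurwitzMove v w

/-!
If `g ^ n = 1`, a block of `n` copies of `g` braids past any single entry `a` unchanged
(sliding `a` through the block conjugates it by `g ^ n = 1`). Sliding the block the other way past
an entry `x` conjugates every copy by `x`. Combining the two, the block can be conjugated by
any entry of `v` while `v` is restored. The elements `c` for which conjugating the block by `c`
is a braid equivalence (for every `g` with `g ^ n = 1`) form a subgroup, which contains the
entries of `v` and is therefore all of `G`.
-/

theorem Relation.EqvGen.map {α β : Type*} {r : α → α → Prop} {s : β → β → Prop}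
    {f : α → β} (hf : ∀ a b, r a b → s (f a) (f b)) {a b : α} (h : Relation.EqvGen r a b) :
    Relation.EqvGen s (f a) (f b) := by
  induction h with
  | rel _ _ h => exact .rel _ _ (hf _ _ h)
  | refl => exact .refl _
  | symm _ _ _ ih => exact .symm _ _ ih
  | trans _ _ _ _ _ ih₁ ih₂ => exact .trans _ _ _ ih₁ ih₂

theorem pow_inv_mul_mul_eq_one {G : Type*} [Group G] {g : G} {n : ℕ} (hg : g ^ n = 1)
    (c : G) : (c⁻¹ * g * c) ^ n = 1 := by
  simpa [hg] using conj_pow (a := c⁻¹) (b := g) (i := n)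

section

variable {G : Type*} [Group G]

open List

namespace HurwitzMove

theorem append_left (p : List G) {v w : List G} (h : HurwitzMove v w) :
    HurwitzMove (p ++ v) (p ++ w) := by
  obtain ⟨x, y, a, b, rfl, rfl⟩ := h
  exact ⟨p ++ x, y, a, b, by simp, by simp⟩

theorem append_right (t : List G) {v w : List G} (h : HurwitzMove v w) :
    HurwitzMove (v ++ t) (w ++ t) := by
  obtain ⟨x, y, a, b, rfl, rfl⟩ := h
  exact ⟨x, y ++ t, a, b, by simp, by simp⟩

theorem cons_cons (a b : G) (y : List G) :
    HurwitzMove (a :: b :: y) (b :: (b⁻¹ * a * b) :: y) :=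
  ⟨[], y, a, b, rfl, rfl⟩

theorem braidEquiv {v w : List G} (h : HurwitzMove v w) : BraidEquiv v w :=
  .rel _ _ h

end HurwitzMove

namespace BraidEquiv

theorem refl (v : List G) : BraidEquiv v v := Relation.EqvGen.refl v

theorem symm {v w : List G} (h : BraidEquiv v w) : BraidEquiv w v := Relation.EqvGen.symm _ _ h

theorem trans {u v w : List G} (h : BraidEquiv u v) (h' : BraidEquiv v w) :
    BraidEquiv u w := Relation.EqvGen.trans _ _ _ h h'

instance : Trans (@BraidEquiv G _) BraidEquiv BraidEquiv := ⟨trans⟩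

theorem append_left (p : List G) {v w : List G} (h : BraidEquiv v w) :
    BraidEquiv (p ++ v) (p ++ w) :=
  Relation.EqvGen.map (fun _ _ hm ↦ HurwitzMove.append_left p hm) h

theorem append_right (t : List G) {v w : List G} (h : BraidEquiv v w) :
    BraidEquiv (v ++ t) (w ++ t) :=
  Relation.EqvGen.map (fun _ _ hm ↦ HurwitzMove.append_right t hm) h

theorem cons (a : G) {v w : List G} (h : BraidEquiv v w) : BraidEquiv (a :: v) (a :: w) :=
  h.append_left [a]

end BraidEquiv

theorem braidEquiv_cons_replicate (g a : G) (k : ℕ) :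
    BraidEquiv (a :: replicate k g) (replicate k g ++ [(g ^ k)⁻¹ * a * g ^ k]) := by
  induction k generalizing a with
  | zero => simp [BraidEquiv.refl]
  | succ k ih =>
    have hconj : (g ^ k)⁻¹ * (g⁻¹ * a * g) * g ^ k = (g ^ (k + 1))⁻¹ * a * g ^ (k + 1) := by
      group
    calc BraidEquiv (a :: g :: replicate k g) (g :: (g⁻¹ * a * g) :: replicate k g) :=
          (HurwitzMove.cons_cons a g _).braidEquiv
      BraidEquiv _ _ := by simpa [hconj, replicate_succ] using (ih (g⁻¹ * a * g)).cons g

theorem braidEquiv_replicate_append_singleton (g a : G) (k : ℕ) :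
    BraidEquiv (replicate k g ++ [a]) (a :: replicate k (a⁻¹ * g * a)) := by
  induction k with
  | zero => simp [BraidEquiv.refl]
  | succ k ih => exact ih.cons g |>.trans (HurwitzMove.cons_cons g a _).braidEquiv

theorem braidEquiv_append_replicate_comm {g : G} {n : ℕ} (hg : g ^ n = 1) (w : List G) :
    BraidEquiv (w ++ replicate n g) (replicate n g ++ w) := by
  induction w with
  | nil => simp [BraidEquiv.refl]
  | cons a w ih =>
    have hslide : BraidEquiv (a :: replicate n g) (replicate n g ++ [a]) := by
      simpa [hg] using braidEquiv_cons_replicate g a n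
    simpa using (ih.cons a).trans (hslide.append_right w)

theorem braidEquiv_append_replicate_conj_of_mem {g x : G} {n : ℕ} (hg : g ^ n = 1)
    {v : List G} (hx : x ∈ v) :
    BraidEquiv (v ++ replicate n g) (v ++ replicate n (x⁻¹ * g * x)) := by
  obtain ⟨u, w, rfl⟩ := append_of_mem hx
  suffices BraidEquiv (x :: w ++ replicate n g) (x :: w ++ replicate n (x⁻¹ * g * x)) by
    simpa using this.append_left u
  calc BraidEquiv (x :: w ++ replicate n g) (x :: replicate n g ++ w) := by
        simpa using (braidEquiv_append_replicate_comm hg w).cons x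
    BraidEquiv _ (replicate n g ++ [x] ++ w) := by
        simpa using (braidEquiv_append_replicate_comm hg [x]).append_right w
    BraidEquiv _ (x :: replicate n (x⁻¹ * g * x) ++ w) :=
        (braidEquiv_replicate_append_singleton g x n).append_right w
    BraidEquiv _ _ := by
        simpa using ((braidEquiv_append_replicate_comm (pow_inv_mul_mul_eq_one hg x) w).cons
          x).symm

def conjBraidSubgroup (v : List G) (n : ℕ) : Subgroup G where
  carrier := {c | ∀ g : G, g ^ n = 1 →
    BraidEquiv (v ++ replicate n g) (v ++ replicate n (c⁻¹ * g * c))}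
  one_mem' g _ := by simpa using BraidEquiv.refl _
  mul_mem' {c d} hc hd g hg := by
    have hconj : d⁻¹ * (c⁻¹ * g * c) * d = (c * d)⁻¹ * g * (c * d) := by group
    simpa [hconj] using (hc g hg).trans (hd _ (pow_inv_mul_mul_eq_one hg c))
  inv_mem' {c} hc g hg := by
    simpa [mul_assoc] using (hc _ (pow_inv_mul_mul_eq_one hg c⁻¹)).symm

theorem conjBraidSubgroup_eq_top {v : List G} (hv : Subgroup.closure {x : G | x ∈ v} = ⊤)
    (n : ℕ) : conjBraidSubgroup v n = ⊤ := by
  rw [eq_top_iff, ← hv, Subgroup.closure_le]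
  exact fun _ hx _ hg ↦ braidEquiv_append_replicate_conj_of_mem hg hx

end

theorem conway_parker {G : Type*} [Group G] {g₁ g₂ : G} {n : ℕ}
    (hconj : IsConj g₁ g₂) (h₁ : orderOf g₁ = n)
    (v : List G) (hv : Subgroup.closure {x : G | x ∈ v} = ⊤) :
    BraidEquiv (v ++ List.replicate n g₁) (v ++ List.replicate n g₂) := by
  obtain ⟨c, rfl⟩ := isConj_iff.mp hconj
  have hc : c⁻¹ ∈ conjBraidSubgroup v n := conjBraidSubgroup_eq_top hv n ▸ Subgroup.mem_top _
  simpa using hc g₁ (h₁ ▸ pow_orderOf_eq_one g₁)
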